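/- Let f : Σ → ℝ³ be a CMC-H immersion (H ≠ 0) with unit normal N, and define the parallel surface f^d = f + H⁻¹ N with normal N^d = −N. If f has first fundamental form e^{2u}(dx²+dy²), Hopf differential function Q = ⟨f_{zz}, N⟩ satisfying the normalization H = 2Q, and mean curvature H, then f^d has first fundamental form e^{−2u}(dx²+dy²), Hopf differential function Q_d = ⟨f^d_{zz}, N^d⟩ = Q, and mean curvature H_d = 2e^{2u}⟨f^d_{z z̄}, N^d⟩ = H. -/

import Mathlib

/-! With `H = 2Q` the Weingarten equation reads `N_z = -H f_z - H e^{-2u} f_z̄`, so the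
parallel surface at distance `1/H` is exactly where the `f_z`-component cancels:
`f^d_z = -e^{-2u} f_z̄`. Hence `f^d` is conformal with the reciprocal conformal factor, and
differentiating once more gives `f^d_zz = 2 u_z e^{-2u} f_z̄ - Q N` and `f^d_zz̄ = -Q e^{-2u} N`.
Pairing these with `N^d = -N` and using the orthonormality of the frame `(f_z, f_z̄, N)` yields
`Q_d = Q` and `H_d = H`. -/

open Matrix Complex Finset

noncomputable section

/-- ℂ-bilinear extension of the Euclidean inner product on ℝ³. -/
def B (v w : Fin 3 → ℂ) : ℂ := ∑ i, v i * w i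

open ComplexConjugate

theorem B_comm (v w : Fin 3 → ℂ) : B v w = B w v := by
  simp only [B, mul_comm]

theorem B_mul_left (c : ℂ) (v w : Fin 3 → ℂ) : B (fun i => c * v i) w = c * B v w := by
  simp only [B, Finset.mul_sum, mul_assoc]

theorem B_mul_right (c : ℂ) (v w : Fin 3 → ℂ) : B v (fun i => c * w i) = c * B v w := by
  rw [B_comm, B_mul_left, B_comm]

theorem B_neg_right (v w : Fin 3 → ℂ) : B v (fun i => -w i) = -B v w := by
  simp only [B, mul_neg, Finset.sum_neg_distrib]

theorem B_sub_left (u v w : Fin 3 → ℂ) :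
    B (fun i => u i - v i) w = B u w - B v w := by
  simp only [B, sub_mul, Finset.sum_sub_distrib]

theorem B_conj_conj (v w : Fin 3 → ℂ) :
    B (fun i => conj (v i)) (fun i => conj (w i)) = conj (B v w) := by
  simp only [B, map_sum, map_mul]

theorem B_conj_left_of_real {v w : Fin 3 → ℂ} (hw : ∀ i, conj (w i) = w i) :
    B (fun i => conj (v i)) w = conj (B v w) := by
  conv_lhs => rw [← funext hw]
  exact B_conj_conj v w

theorem ofReal_exp_two_mul_mul_exp_neg (u : ℝ) :
    (Real.exp (2 * u) : ℂ) * Real.exp (-(2 * u)) = 1 := by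
  rw [← ofReal_mul, ← Real.exp_add, add_neg_cancel, Real.exp_zero, ofReal_one]

section DualSurface

variable {H Q u : ℝ} {uz : ℂ} {fz fzz fzzb N Nz Nzz Nzzb : Fin 3 → ℂ}

theorem dual_fz_eq (hH : H ≠ 0) (hHQ : H = 2 * Q)
    (hNz : Nz = fun i => -(H : ℂ) * fz i - 2 * Q * Real.exp (-(2 * u)) * conj (fz i)) :
    (fun i => fz i + (H : ℂ)⁻¹ * Nz i) = fun i => -(Real.exp (-(2 * u)) : ℂ) * conj (fz i) := by
  subst hNz hHQ
  have hQ : (Q : ℂ) ≠ 0 := by exact_mod_cast right_ne_zero_of_mul hH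
  funext i
  simp only [ofReal_mul, ofReal_ofNat]
  field_simp
  ring

theorem dual_fzz_eq (hH : H ≠ 0) (hHQ : H = 2 * Q)
    (hfzzb : fzzb = fun i => (H : ℂ) / 2 * Real.exp (2 * u) * N i)
    (hNzz : Nzz = fun i => -(H : ℂ) * fzz i
      + 4 * Q * uz * Real.exp (-(2 * u)) * conj (fz i)
      - 2 * Q * Real.exp (-(2 * u)) * fzzb i) :
    (fun i => fzz i + (H : ℂ)⁻¹ * Nzz i)
      = fun i => 2 * uz * Real.exp (-(2 * u)) * conj (fz i) - Q * N i := by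
  subst hNzz hfzzb hHQ
  have hQ : (Q : ℂ) ≠ 0 := by exact_mod_cast right_ne_zero_of_mul hH
  funext i
  simp only [ofReal_mul, ofReal_ofNat]
  field_simp
  linear_combination (-2 * Q * N i) * ofReal_exp_two_mul_mul_exp_neg u

theorem dual_fzzb_eq (hH : H ≠ 0) (hHQ : H = 2 * Q) (hN : ∀ i, conj (N i) = N i)
    (hfzz : fzz = fun i => 2 * uz * fz i + (Q : ℂ) * N i)
    (hfzzb : fzzb = fun i => (H : ℂ) / 2 * Real.exp (2 * u) * N i)
    (hNzzb : Nzzb = fun i => -(H : ℂ) * fzzb i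
      + 4 * Q * conj uz * Real.exp (-(2 * u)) * conj (fz i)
      - 2 * Q * Real.exp (-(2 * u)) * conj (fzz i)) :
    (fun i => fzzb i + (H : ℂ)⁻¹ * Nzzb i) = fun i => -(Q * Real.exp (-(2 * u)) : ℂ) * N i := by
  subst hNzzb hfzz hfzzb hHQ
  have hQ : (Q : ℂ) ≠ 0 := by exact_mod_cast right_ne_zero_of_mul hH
  funext i
  simp only [map_add, map_mul, map_ofNat, conj_ofReal, hN, ofReal_mul, ofReal_ofNat]
  field_simp
  ring

end DualSurface

/-- data of the dual (parallel) CMC surface at a point.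
All derivatives of `f` and `N` at the point under consideration are given as
data, subject to the Gauss–Weingarten equations for a normalized isothermic
CMC-H immersion.  The derivatives of the dual surface `f^d = f + H⁻¹ N` are
then determined by the product rule, and we conclude that `f^d` has first
fundamental form `e^{-2u}(dx²+dy²)`, Hopf differential `Q_d = Q` and mean
curvature `H_d = H` (all computed with respect to the normal `N^d = -N`). -/
theorem stmt4
    (H Q u : ℝ) (uz : ℂ)
    (fz fzz fzzb N : Fin 3 → ℂ)
    -- N is real (a vector in ℝ³):
    (hNreal : ∀ i, (N i).im = 0)
    -- H ≠ 0 and the normalization H = 2Q: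
    (hH : H ≠ 0) (hHQ : (H : ℝ) = 2 * Q)
    -- unit normal, orthogonal to the tangent space:
    (hNN : B N N = 1) (hfzN : B fz N = 0)
    -- conformal metric e^{2u}(dx²+dy²):  ⟨f_z,f_z⟩ = 0, ⟨f_z, f_z̄⟩ = e^{2u}/2,
    -- where f_z̄ = conj(f_z) since f is real valued:
    (hconf : B fz fz = 0)
    (hmetric : B fz (fun i => starRingEnd ℂ (fz i)) = Real.exp (2*u) / 2)
    -- Gauss–Weingarten equations:
    (hGW1 : fzz = fun i => 2 * uz * fz i + (Q : ℂ) * N i)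
    (hGW2 : fzzb = fun i => (H : ℂ)/2 * Real.exp (2*u) * N i)
    -- with N_z determined by the Weingarten equation:
    (Nz : Fin 3 → ℂ)
    (hGW3 : Nz = fun i => -(H : ℂ) * fz i
        - 2 * Q * Real.exp (-(2*u)) * starRingEnd ℂ (fz i))
    -- second derivatives of N, obtained by differentiating hGW3 and using
    -- f_{z̄ z} = fzzb, f_{z̄ z̄} = conj fzz, u real (so u_z̄ = conj u_z):
    (Nzz Nzzb : Fin 3 → ℂ)
    (hNzz : Nzz = fun i => -(H : ℂ) * fzz i
        + 4 * Q * uz * Real.exp (-(2*u)) * starRingEnd ℂ (fz i)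
        - 2 * Q * Real.exp (-(2*u)) * fzzb i)
    (hNzzb : Nzzb = fun i => -(H : ℂ) * fzzb i
        + 4 * Q * (starRingEnd ℂ uz) * Real.exp (-(2*u)) * starRingEnd ℂ (fz i)
        - 2 * Q * Real.exp (-(2*u)) * starRingEnd ℂ (fzz i))
    -- derivatives of the dual surface f^d = f + H⁻¹ N:
    (fdz fdzz fdzzb : Fin 3 → ℂ)
    (hfdz : fdz = fun i => fz i + (H : ℂ)⁻¹ * Nz i)
    (hfdzz : fdzz = fun i => fzz i + (H : ℂ)⁻¹ * Nzz i)
    (hfdzzb : fdzzb = fun i => fzzb i + (H : ℂ)⁻¹ * Nzzb i) :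
    -- f^d is conformal with first fundamental form e^{-2u}(dx²+dy²):
    B fdz fdz = 0 ∧
    B fdz (fun i => starRingEnd ℂ (fdz i)) = Real.exp (-(2*u)) / 2 ∧
    -- Hopf differential Q_d = ⟨f^d_{zz}, N^d⟩ = Q, with N^d = -N:
    B fdzz (fun i => -N i) = (Q : ℂ) ∧
    -- mean curvature H_d = 2 e^{2u} ⟨f^d_{z z̄}, N^d⟩ = H:
    2 * Real.exp (2*u) * B fdzzb (fun i => -N i) = (H : ℂ) := by
  have hN : ∀ i, conj (N i) = N i := fun i => conj_eq_iff_im.2 (hNreal i)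
  have hexp := ofReal_exp_two_mul_mul_exp_neg u
  rw [hfdz, dual_fz_eq hH hHQ hGW3, hfdzz, dual_fzz_eq hH hHQ hGW2 hNzz,
    hfdzzb, dual_fzzb_eq hH hHQ hN hGW1 hGW2 hNzzb]
  refine ⟨?_, ?_, ?_, ?_⟩
  · rw [B_mul_left, B_mul_right, B_conj_conj, hconf, map_zero, mul_zero, mul_zero]
  · simp only [map_mul, map_neg, conj_ofReal, conj_conj]
    rw [B_mul_left, B_mul_right, B_comm, hmetric]
    linear_combination ((Real.exp (-(2 * u)) : ℂ) / 2) * hexp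
  · rw [B_neg_right, B_sub_left, B_mul_left, B_mul_left, B_conj_left_of_real hN, hfzN, hNN,
      map_zero]
    ring
  · rw [B_mul_left, B_neg_right, hNN, hHQ]
    simp only [ofReal_mul, ofReal_ofNat]
    linear_combination (2 * Q : ℂ) * hexp
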